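/- Every inadmissible monochromatic hyperedge of H_{k,n} (under a labeling whose only inadmissible labels are label k on the face x_k = 0) contains exactly k−1 vertices from the face x_k = 0, and all k−1 of these vertices have label k, i.e., lie in Z. -/

import Mathlib

open scoped BigOperators

/-- The discretized simplex `Δ_{k,n}`: points with nonnegative coordinates that are
integer multiples of `1/n` summing to `1`. -/
def disimplex (k n : ℕ) : Set (Fin k → ℚ) :=
  {x | (∀ i, 0 ≤ x i) ∧ (∀ i, ∃ m : ℤ, (n : ℚ) * x i = (m : ℚ)) ∧ ∑ i, x i = 1}

/-- The `i`-th standard unit vector in `ℚ^k`. -/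
def stdVec (k : ℕ) (i : Fin k) : Fin k → ℚ := fun j => if j = i then 1 else 0

/-- The hyperedge of `H_{k,n}` indexed by a point `z` of `Δ_{k,n-1}`. -/
def hyperedge (k n : ℕ) (z : Fin k → ℚ) : Set (Fin k → ℚ) :=
  {y | ∃ i : Fin k, y = fun j => (((n : ℚ) - 1) / n) * z j + (1 / n) * stdVec k i j}

/-- The set of hyperedges of the hypergraph `H_{k,n}`. -/
def hyperedges (k n : ℕ) : Set (Set (Fin k → ℚ)) :=
  (hyperedge k n) '' (disimplex k (n - 1))

/-! The vertices of the hyperedge indexed by `z` are `((n-1)/n) z + (1/n) e_i`. If the vertex with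
index `i₀` is on the face `x_j = 0`, then `((n-1)/n) z_j = 0` and `i₀ ≠ j`, so the `j`-th coordinate
of the vertex with index `i` is `[i = j] / n`: exactly the `k - 1` vertices with `i ≠ j` lie on the
face. Monochromaticity then gives all of them the label `k` of the inadmissible vertex. -/

section HyperedgeVertex

variable {k n : ℕ} {z : Fin k → ℚ}

def hyperedgeVertex (n : ℕ) (z : Fin k → ℚ) (i : Fin k) : Fin k → ℚ :=
  fun j => (((n : ℚ) - 1) / n) * z j + (1 / n) * stdVec k i j

theorem mem_hyperedge_iff {y : Fin k → ℚ} :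
    y ∈ hyperedge k n z ↔ ∃ i, y = hyperedgeVertex n z i :=
  Iff.rfl

theorem hyperedgeVertex_apply_of_ne {i j : Fin k} (hij : i ≠ j) :
    hyperedgeVertex n z i j = ((n : ℚ) - 1) / n * z j := by
  simp [hyperedgeVertex, stdVec, Ne.symm hij]

theorem natCast_sub_one_div_nonneg (hn : 1 ≤ n) : (0 : ℚ) ≤ ((n : ℚ) - 1) / n := by
  have : (1 : ℚ) ≤ n := by exact_mod_cast hn
  exact div_nonneg (by linarith) (by linarith)

theorem hyperedgeVertex_apply_self_pos (hn : 1 ≤ n) {j : Fin k} (hz : 0 ≤ z j) :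
    0 < hyperedgeVertex n z j j := by
  have hn' : (0 : ℚ) < n := by exact_mod_cast hn
  have := mul_nonneg (natCast_sub_one_div_nonneg hn) hz
  have : (0 : ℚ) < 1 / n := by positivity
  simp only [hyperedgeVertex, stdVec, if_true, mul_one]
  linarith

theorem hyperedgeVertex_injective (hn : n ≠ 0) :
    Function.Injective (hyperedgeVertex n z) := by
  intro a b hab
  simpa [hyperedgeVertex, stdVec, hn] using congrFun hab a

theorem hyperedgeVertex_mem_disimplex (hn : 1 ≤ n) (hz : z ∈ disimplex k (n - 1))
    (i : Fin k) : hyperedgeVertex n z i ∈ disimplex k n := by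
  obtain ⟨hz_nonneg, hz_int, hz_sum⟩ := hz
  have hn' : (0 : ℚ) < n := by exact_mod_cast hn
  refine ⟨fun j => ?_, fun j => ?_, ?_⟩
  · have := mul_nonneg (natCast_sub_one_div_nonneg hn) (hz_nonneg j)
    have : (0 : ℚ) ≤ stdVec k i j := by unfold stdVec; split <;> norm_num
    simp only [hyperedgeVertex]
    positivity
  · obtain ⟨m, hm⟩ := hz_int j
    rw [Nat.cast_sub hn, Nat.cast_one] at hm
    refine ⟨m + if j = i then 1 else 0, ?_⟩
    simp only [hyperedgeVertex, stdVec]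
    split <;> push_cast <;> field_simp <;> linarith
  · simp only [hyperedgeVertex, Finset.sum_add_distrib, ← Finset.mul_sum, hz_sum]
    simp only [stdVec, Finset.sum_ite_eq', Finset.mem_univ, if_true]
    field_simp
    ring

theorem hyperedgeVertex_apply_eq_zero_iff (hn : 1 ≤ n) {i₀ i j : Fin k} (hz : 0 ≤ z j)
    (h₀ : hyperedgeVertex n z i₀ j = 0) :
    hyperedgeVertex n z i j = 0 ↔ i ≠ j := by
  have hi₀ : i₀ ≠ j := by
    rintro rfl
    exact (hyperedgeVertex_apply_self_pos hn hz).ne' h₀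
  refine ⟨?_, fun hij => ?_⟩
  · rintro h rfl
    exact (hyperedgeVertex_apply_self_pos hn hz).ne' h
  · rw [hyperedgeVertex_apply_of_ne hij, ← hyperedgeVertex_apply_of_ne hi₀, h₀]

theorem ncard_hyperedge_inter_face (hn : 1 ≤ n) {i₀ j : Fin k} (hz : 0 ≤ z j)
    (h₀ : hyperedgeVertex n z i₀ j = 0) :
    {x ∈ hyperedge k n z | x j = 0}.ncard = k - 1 := by
  have hface : {x ∈ hyperedge k n z | x j = 0} = hyperedgeVertex n z '' {j}ᶜ := by
    ext x
    simp only [Set.mem_ofPred_eq, mem_hyperedge_iff, Set.mem_image, Set.mem_compl_singleton_iff]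
    constructor
    · rintro ⟨⟨i, rfl⟩, hx⟩
      exact ⟨i, (hyperedgeVertex_apply_eq_zero_iff hn hz h₀).1 hx, rfl⟩
    · rintro ⟨i, hi, rfl⟩
      exact ⟨⟨i, rfl⟩, (hyperedgeVertex_apply_eq_zero_iff hn hz h₀).2 hi⟩
  rw [hface, Set.ncard_image_of_injective _ (hyperedgeVertex_injective (by omega)),
    Set.ncard_compl, Set.ncard_singleton, Nat.card_eq_fintype_card, Fintype.card_fin]

end HyperedgeVertex

/-- An inadmissible monochromatic hyperedge (under a labeling whose only
inadmissible labels are label `k` on the face `x_k = 0`) contains exactly `k-1`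
vertices from the face `x_k = 0`, all of which carry label `k`, i.e. lie in `Z`. -/
theorem stmt7 (k n : ℕ) (hk : 2 ≤ k) (hn : 1 ≤ n)
    (ℓ : (Fin k → ℚ) → Fin k)
    (hface : ∀ x ∈ disimplex k n, ¬ 0 < x (ℓ x) →
      x ⟨k - 1, by omega⟩ = 0 ∧ ℓ x = ⟨k - 1, by omega⟩)
    (e : Set (Fin k → ℚ)) (he : e ∈ hyperedges k n)
    (hmono : ∃ c, ∀ x ∈ e, ℓ x = c)
    (hinad : ∃ x ∈ e, ¬ 0 < x (ℓ x)) :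
    {x ∈ e | x ⟨k - 1, by omega⟩ = 0}.ncard = k - 1 ∧
      ∀ x ∈ e, x ⟨k - 1, by omega⟩ = 0 → ℓ x = ⟨k - 1, by omega⟩ := by
  obtain ⟨z, hz, rfl⟩ := he
  obtain ⟨_, hx₀, hinad⟩ := hinad
  obtain ⟨i₀, rfl⟩ := mem_hyperedge_iff.1 hx₀
  obtain ⟨hzero, hlabel⟩ := hface _ (hyperedgeVertex_mem_disimplex hn hz i₀) hinad
  refine ⟨ncard_hyperedge_inter_face hn (hz.1 _) hzero, fun x hx _ => ?_⟩
  obtain ⟨c, hc⟩ := hmono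
  rw [hc x hx, ← hc _ hx₀, hlabel]
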